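/- arXiv:2206.13355 — 4 statements merged into one kernel-verified Lean document; each statement's English description precedes it below -/
import Mathlib

section
/- Let A be a strictly positive m×n matrix. If r, c ∈ ℝ^m_{>0} × ℝ^n_{>0} and r', c' are two pairs of positive scaling vectors such that both scaled matrices B[i,j] = r_i · c_j · A[i,j] and B'[i,j] = r'_i · c'_j · A[i,j] satisfy the normalization that the product of entries in each row equals 1 and the product of entries in each column equals 1, then B = B'. -/
/-!
Taking logarithms, `log B i j - log B' i j = x i + y j` with `x i = log (r i / r' i)` and
`y j = log (c j / c' j)`, and the normalizations say that every row sum and every column sum of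
this matrix vanishes. A matrix of the form `x i + y j` with vanishing row and column sums is zero.
-/

open Finset Real

theorem add_eq_zero_of_forall_sum_add_eq_zero {ι κ G : Type*} [Fintype ι] [Fintype κ]
    [AddCommGroup G] [IsAddTorsionFree G] (x : ι → G) (y : κ → G)
    (hrow : ∀ i, ∑ j, (x i + y j) = 0) (hcol : ∀ j, ∑ i, (x i + y j) = 0) (i : ι) (j : κ) :
    x i + y j = 0 := by
  set p := Fintype.card ι
  set q := Fintype.card κ
  have hrow' : ∀ i, q • x i + ∑ j, y j = 0 := fun i => by
    simpa only [sum_add_distrib, sum_const, card_univ] using hrow i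
  have hcol' : ∀ j, ∑ i, x i + p • y j = 0 := fun j => by
    simpa only [sum_add_distrib, sum_const, card_univ] using hcol j
  have htotal : q • ∑ i, x i + p • ∑ j, y j = 0 := by
    have := sum_eq_zero fun i (_ : i ∈ univ) => hrow' i
    rwa [sum_add_distrib, sum_const, card_univ, ← smul_sum] at this
  have hpq : p * q ≠ 0 :=
    mul_ne_zero (Fintype.card_pos_iff.2 ⟨i⟩).ne' (Fintype.card_pos_iff.2 ⟨j⟩).ne'
  refine (nsmul_eq_zero_iff_right hpq).1 ?_
  calc (p * q) • (x i + y j) = p • (q • x i) + q • (p • y j) := by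
        rw [smul_add, mul_nsmul', mul_nsmul]
    _ = -(q • ∑ i, x i + p • ∑ j, y j) := by
        rw [eq_neg_of_add_eq_zero_left (hrow' i), eq_neg_of_add_eq_zero_right (hcol' j)]
        simp only [smul_neg, neg_add_rev, add_comm]
    _ = 0 := by rw [htotal, neg_zero]

theorem sum_log_eq_zero_of_prod_eq_one {ι : Type*} {s : Finset ι} {f : ι → ℝ}
    (hf : ∀ i ∈ s, 0 < f i) (h : ∏ i ∈ s, f i = 1) : ∑ i ∈ s, log (f i) = 0 := by
  rw [← log_prod fun i hi => (hf i hi).ne', h, log_one]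

theorem log_mul_mul_of_pos {a b d : ℝ} (ha : 0 < a) (hb : 0 < b) (hd : 0 < d) :
    log (a * b * d) = log a + log b + log d := by
  rw [log_mul (mul_pos ha hb).ne' hd.ne', log_mul ha.ne' hb.ne']

/-- Uniqueness of the row/column product-normalized scaling of a positive matrix. -/
theorem stmt_0 (m n : ℕ) (A : Fin m → Fin n → ℝ) (hA : ∀ i j, 0 < A i j)
    (r : Fin m → ℝ) (c : Fin n → ℝ) (r' : Fin m → ℝ) (c' : Fin n → ℝ)
    (hr : ∀ i, 0 < r i) (hc : ∀ j, 0 < c j) (hr' : ∀ i, 0 < r' i) (hc' : ∀ j, 0 < c' j)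
    (hrow : ∀ i, ∏ j, r i * c j * A i j = 1)
    (hcol : ∀ j, ∏ i, r i * c j * A i j = 1)
    (hrow' : ∀ i, ∏ j, r' i * c' j * A i j = 1)
    (hcol' : ∀ j, ∏ i, r' i * c' j * A i j = 1) :
    ∀ i j, r i * c j * A i j = r' i * c' j * A i j := by
  have hB : ∀ i j, 0 < r i * c j * A i j := fun i j => mul_pos (mul_pos (hr i) (hc j)) (hA i j)
  have hB' : ∀ i j, 0 < r' i * c' j * A i j := fun i j =>
    mul_pos (mul_pos (hr' i) (hc' j)) (hA i j)
  have hsplit : ∀ i j, log (r i * c j * A i j) - log (r' i * c' j * A i j)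
      = (log (r i) - log (r' i)) + (log (c j) - log (c' j)) := fun i j => by
    rw [log_mul_mul_of_pos (hr i) (hc j) (hA i j), log_mul_mul_of_pos (hr' i) (hc' j) (hA i j)]
    ring
  intro i j
  refine log_injOn_pos (hB i j) (hB' i j) (sub_eq_zero.1 ?_)
  rw [hsplit]
  refine add_eq_zero_of_forall_sum_add_eq_zero
    (fun i => log (r i) - log (r' i)) (fun j => log (c j) - log (c' j)) (fun i => ?_) (fun j => ?_) i j
  · simp only [← hsplit, sum_sub_distrib, sum_log_eq_zero_of_prod_eq_one (fun j _ => hB i j) (hrow i),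
      sum_log_eq_zero_of_prod_eq_one (fun j _ => hB' i j) (hrow' i), sub_zero]
  · simp only [← hsplit, sum_sub_distrib, sum_log_eq_zero_of_prod_eq_one (fun i _ => hB i j) (hcol j),
      sum_log_eq_zero_of_prod_eq_one (fun i _ => hB' i j) (hcol' j), sub_zero]
end

section
/- Let A be a strictly positive fully observed m×n matrix and define the completion operator on a scaled-out entry: with r, c the positive scaling vectors normalizing A (row and column products of r_i c_j A[i,j] equal 1), define MCA(A)[i,j] = A[i,j]. For positive diagonal rescalings u, v, define B[i,j] = u_i v_j A[i,j]. Then the predicted value for any entry computed from B's scaling vectors equals u_i v_j times the predicted value computed from A's scaling vectors; that is, r_i^{-1} c_j^{-1} transforms to u_i v_j r_i^{-1} c_j^{-1}. -/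
/- If `(r, c)` and `(s, d)` both normalize `A`, the ratios `x = s / r`, `y = d / c`
normalize the all-ones matrix. Its row equations give `x i ^ n * ∏ y = 1`, its column equations
`∏ x * y j ^ m = 1`, and multiplying all row equations gives `(∏ x) ^ n * (∏ y) ^ m = 1`; together
`(x i * y j) ^ (n * m) = 1`, so `x i * y j = 1` by positivity. For the rescaled data `u i * v j * A i j`
the pair `(r' * u, c' * v)` normalizes `A`, hence `r' i * u i * c' j * v j = r i * c j`. -/

open Finset

lemma mul_eq_one_of_prod_mul_eq_one {ι κ : Type*} [Fintype ι] [Fintype κ]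
    {x : ι → ℝ} {y : κ → ℝ} (hx : ∀ i, 0 < x i) (hy : ∀ j, 0 < y j)
    (hrow : ∀ i, ∏ j, x i * y j = 1) (hcol : ∀ j, ∏ i, x i * y j = 1) (i : ι) (j : κ) :
    x i * y j = 1 := by
  have hrow' : ∀ i, x i ^ Fintype.card κ * ∏ j, y j = 1 := fun i => by
    simpa [prod_mul_distrib] using hrow i
  have hcol' : ∀ j, (∏ i, x i) * y j ^ Fintype.card ι = 1 := fun j => by
    simpa [prod_mul_distrib] using hcol j
  have htotal : (∏ i, x i) ^ Fintype.card κ * (∏ j, y j) ^ Fintype.card ι = 1 := by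
    simpa [prod_mul_distrib, prod_pow] using prod_eq_one fun i (_ : i ∈ univ) => hrow' i
  have hpow : (x i * y j) ^ (Fintype.card κ * Fintype.card ι) = 1 := by
    calc (x i * y j) ^ (Fintype.card κ * Fintype.card ι)
        = (x i ^ Fintype.card κ * ∏ j, y j) ^ Fintype.card ι
            * ((∏ i, x i) * y j ^ Fintype.card ι) ^ Fintype.card κ
            * ((∏ i, x i) ^ Fintype.card κ * (∏ j, y j) ^ Fintype.card ι)⁻¹ := by
          field_simp [(prod_pos fun i _ => hx i).ne', (prod_pos fun j _ => hy j).ne']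
          ring
      _ = 1 := by rw [hrow', hcol', htotal]; simp
  have hcard : Fintype.card κ * Fintype.card ι ≠ 0 :=
    mul_ne_zero (Fintype.card_pos_iff.mpr ⟨j⟩).ne' (Fintype.card_pos_iff.mpr ⟨i⟩).ne'
  exact (pow_eq_one_iff_of_nonneg (mul_pos (hx i) (hy j)).le hcard).mp hpow

lemma mul_eq_mul_of_prod_scaling_eq_one {ι κ : Type*} [Fintype ι] [Fintype κ]
    {A : ι → κ → ℝ} {r s : ι → ℝ} {c d : κ → ℝ}
    (hr : ∀ i, 0 < r i) (hc : ∀ j, 0 < c j) (hs : ∀ i, 0 < s i) (hd : ∀ j, 0 < d j)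
    (hrow : ∀ i, ∏ j, r i * c j * A i j = 1) (hcol : ∀ j, ∏ i, r i * c j * A i j = 1)
    (hrow' : ∀ i, ∏ j, s i * d j * A i j = 1) (hcol' : ∀ j, ∏ i, s i * d j * A i j = 1)
    (i : ι) (j : κ) :
    s i * d j = r i * c j := by
  have hA : ∀ i j, A i j ≠ 0 := fun i j =>
    right_ne_zero_of_mul (prod_ne_zero_iff.mp (by rw [hrow i]; exact one_ne_zero) j (mem_univ j))
  have hratio : ∀ i j, s i / r i * (d j / c j) = s i * d j * A i j / (r i * c j * A i j) :=
    fun i j => by field_simp [(hr i).ne', (hc j).ne', hA i j]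
  have key := mul_eq_one_of_prod_mul_eq_one (fun i => div_pos (hs i) (hr i))
    (fun j => div_pos (hd j) (hc j))
    (fun i => by simp only [hratio, prod_div_distrib, hrow i, hrow' i, div_one])
    (fun j => by simp only [hratio, prod_div_distrib, hcol j, hcol' j, div_one]) i j
  field_simp [(hr i).ne', (hc j).ne'] at key
  linarith

theorem stmt_7_general (m n : ℕ) (A : Fin m → Fin n → ℝ)
    (u : Fin m → ℝ) (v : Fin n → ℝ) (hu : ∀ i, 0 < u i) (hv : ∀ j, 0 < v j)
    (r : Fin m → ℝ) (c : Fin n → ℝ) (hr : ∀ i, 0 < r i) (hc : ∀ j, 0 < c j)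
    (hrow : ∀ i, ∏ j, r i * c j * A i j = 1)
    (hcol : ∀ j, ∏ i, r i * c j * A i j = 1)
    (r' : Fin m → ℝ) (c' : Fin n → ℝ) (hr' : ∀ i, 0 < r' i) (hc' : ∀ j, 0 < c' j)
    (hrow' : ∀ i, ∏ j, r' i * c' j * (u i * v j * A i j) = 1)
    (hcol' : ∀ j, ∏ i, r' i * c' j * (u i * v j * A i j) = 1) :
    ∀ i j, (r' i)⁻¹ * (c' j)⁻¹ = u i * v j * ((r i)⁻¹ * (c j)⁻¹) := by
  have hregroup : ∀ i j, r' i * u i * (c' j * v j) * A i j = r' i * c' j * (u i * v j * A i j) :=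
    fun i j => by ring
  intro i j
  have key := mul_eq_mul_of_prod_scaling_eq_one (s := fun i => r' i * u i)
    (d := fun j => c' j * v j) hr hc (fun i => mul_pos (hr' i) (hu i))
    (fun j => mul_pos (hc' j) (hv j)) hrow hcol
    (fun i => by simpa only [hregroup] using hrow' i)
    (fun j => by simpa only [hregroup] using hcol' j) i j
  field_simp [(hr i).ne', (hc j).ne', (hr' i).ne', (hc' j).ne']
  linarith

/-- Unit consistency of matrix completion (2D): rescaling the data by units `u, v`
rescales every completed entry `r_i⁻¹ c_j⁻¹` by exactly `u_i v_j`. -/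
theorem stmt_7 (m n : ℕ) (A : Fin m → Fin n → ℝ) (hA : ∀ i j, 0 < A i j)
    (u : Fin m → ℝ) (v : Fin n → ℝ) (hu : ∀ i, 0 < u i) (hv : ∀ j, 0 < v j)
    (r : Fin m → ℝ) (c : Fin n → ℝ) (hr : ∀ i, 0 < r i) (hc : ∀ j, 0 < c j)
    (hrow : ∀ i, ∏ j, r i * c j * A i j = 1)
    (hcol : ∀ j, ∏ i, r i * c j * A i j = 1)
    (r' : Fin m → ℝ) (c' : Fin n → ℝ) (hr' : ∀ i, 0 < r' i) (hc' : ∀ j, 0 < c' j)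
    (hrow' : ∀ i, ∏ j, r' i * c' j * (u i * v j * A i j) = 1)
    (hcol' : ∀ j, ∏ i, r' i * c' j * (u i * v j * A i j) = 1) :
    ∀ i j, (r' i)⁻¹ * (c' j)⁻¹ = u i * v j * ((r i)⁻¹ * (c j)⁻¹) :=
  stmt_7_general m n A u v hu hv r c hr hc hrow hcol r' c' hr' hc' hrow' hcol'
end

section
/- Let A be a positive m×n matrix with observed set Ω, let r ∈ ℝ^m_{>0}, c ∈ ℝ^n_{>0} be scaling vectors such that B[i,j] = r_i c_j A[i,j] satisfies ∏_{j : (i,j)∈Ω} B[i,j] = 1 for each row i with at least one observation. Suppose columns j₁, j₂ have the same observation pattern, i.e. (i,j₁) ∈ Ω if and only if (i,j₂) ∈ Ω, with at least one such i, that A[i,j₁] < A[i,j₂] for every such observed i, and that additionally ∏_{i:(i,j)∈Ω} B[i,j] = 1 for both j = j₁ and j = j₂. Then c_{j₁}^{-1} < c_{j₂}^{-1}, and hence for any user p with both (p,j₁),(p,j₂) unobserved, the completed entries satisfy r_p^{-1} c_{j₁}^{-1} < r_p^{-1} c_{j₂}^{-1}. -/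
/-- Consensus ordering (2D): if every user who rated both products `j₁, j₂` rated
`j₁` strictly lower, the two columns have the same raters, and both columns are
product-normalized after scaling, then `c j₁⁻¹ < c j₂⁻¹` and the completed
entries preserve the ordering for any unobserved user. -/
theorem stmt_11 (m n : ℕ) (A : Fin m → Fin n → ℝ) (hA : ∀ i j, 0 < A i j)
    (Ω : Finset (Fin m × Fin n))
    (r : Fin m → ℝ) (c : Fin n → ℝ) (hr : ∀ i, 0 < r i) (hc : ∀ j, 0 < c j)
    (hrow : ∀ i, (∃ j, (i, j) ∈ Ω) →
        ∏ j ∈ Finset.univ.filter (fun j => (i, j) ∈ Ω), r i * c j * A i j = 1)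
    (j₁ j₂ : Fin n)
    (hcol₁ : ∏ i ∈ Finset.univ.filter (fun i => (i, j₁) ∈ Ω), r i * c j₁ * A i j₁ = 1)
    (hcol₂ : ∏ i ∈ Finset.univ.filter (fun i => (i, j₂) ∈ Ω), r i * c j₂ * A i j₂ = 1)
    (hsame : ∀ i, (i, j₁) ∈ Ω ↔ (i, j₂) ∈ Ω)
    (hne : ∃ i, (i, j₁) ∈ Ω)
    (hlt : ∀ i, (i, j₁) ∈ Ω → A i j₁ < A i j₂) :
    (c j₁)⁻¹ < (c j₂)⁻¹ ∧
      ∀ p : Fin m, (p, j₁) ∉ Ω → (p, j₂) ∉ Ω →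
        (r p)⁻¹ * (c j₁)⁻¹ < (r p)⁻¹ * (c j₂)⁻¹ := by
  classical
  set S := Finset.univ.filter (fun i => (i, j₁) ∈ Ω) with hS
  have hS2 : Finset.univ.filter (fun i => (i, j₂) ∈ Ω) = S := by
    ext i; simp [hS, (hsame i).symm]
  rw [hS2] at hcol₂
  have hSne : S.Nonempty := by
    obtain ⟨i, hi⟩ := hne; exact ⟨i, by simp [hS, hi]⟩
  have key : ∀ j, (∏ i ∈ S, r i * c j * A i j)
      = (c j) ^ S.card * ∏ i ∈ S, r i * A i j := by
    intro j
    rw [← Finset.prod_const, ← Finset.prod_mul_distrib]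
    exact Finset.prod_congr rfl (fun i _ => by ring)
  rw [key] at hcol₁ hcol₂
  have hP : ∀ j, 0 < ∏ i ∈ S, r i * A i j := fun j =>
    Finset.prod_pos (fun i _ => mul_pos (hr i) (hA i j))
  have hval : ∀ j, (c j) ^ S.card * ∏ i ∈ S, r i * A i j = 1 →
      (∏ i ∈ S, r i * A i j) = ((c j)⁻¹) ^ S.card := by
    intro j hj
    have hcj : (c j) ^ S.card ≠ 0 := pow_ne_zero _ (ne_of_gt (hc j))
    rw [inv_pow]; exact eq_inv_of_mul_eq_one_right hj
  have h1 := hval j₁ hcol₁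
  have h2 := hval j₂ hcol₂
  have hPlt : (∏ i ∈ S, r i * A i j₁) < ∏ i ∈ S, r i * A i j₂ := by
    refine Finset.prod_lt_prod_of_nonempty
      (fun i _ => mul_pos (hr i) (hA i j₁)) (fun i hi => ?_) hSne
    have hiΩ : (i, j₁) ∈ Ω := by simpa [hS] using hi
    exact mul_lt_mul_of_pos_left (hlt i hiΩ) (hr i)
  have hpow : ((c j₁)⁻¹) ^ S.card < ((c j₂)⁻¹) ^ S.card := by
    rw [← h1, ← h2]; exact hPlt
  have hmain : (c j₁)⁻¹ < (c j₂)⁻¹ :=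
    lt_of_pow_lt_pow_left₀ _ (le_of_lt (inv_pos.mpr (hc j₂))) hpow
  exact ⟨hmain, fun p _ _ =>
    mul_lt_mul_of_pos_left hmain (inv_pos.mpr (hr p))⟩
end

section
/- Let A ∈ ℝ^{I₁×I₂×I₃} be strictly positive. Suppose positive weight vectors z¹ ∈ ℝ^{I₁}, z² ∈ ℝ^{I₂}, z³ ∈ ℝ^{I₃} and z'¹, z'², z'³ both normalize A in the sense that B[i,j,k] = z¹_i z²_j z³_k A[i,j,k] has all 'slice products' equal to 1 (∏_{j,k} B[i,j,k] = 1 for each i, ∏_{i,k} B[i,j,k] = 1 for each j, ∏_{i,j} B[i,j,k] = 1 for each k), and similarly for z'. Then the two normalized tensors are equal: z¹_i z²_j z³_k A[i,j,k] = z'¹_i z'²_j z'³_k A[i,j,k] for all i,j,k. -/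
/-!
Dividing one normalization by the other gives a rank-one gauge tensor `t₁ i * t₂ j * t₃ k`
with positive factors whose slice products are all `1`. The slice product over the `j`-th
slice is `t₂ j ^ (I₁ * I₃)` times a factor independent of `j`, so `t₂` is constant, and likewise
`t₃`. The `i`-th slice product is then `(t₁ i * t₂ j * t₃ k) ^ (I₂ * I₃) = 1`, which forces
`t₁ i * t₂ j * t₃ k = 1`, i.e. the two normalized tensors agree.
-/

open Finset

section ProdConst

variable {ι κ : Type*} [Fintype ι] [Fintype κ]

theorem prod_prod_const_mul {M : Type*} [CommMonoid M] (x : M) (f : ι → κ → M) :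
    ∏ i, ∏ k, x * f i k = x ^ (Fintype.card κ * Fintype.card ι) * ∏ i, ∏ k, f i k := by
  simp only [prod_mul_distrib, prod_const, card_univ, pow_mul]

theorem eq_of_forall_prod_prod_const_mul_eq_one [Nonempty ι] [Nonempty κ] {β : Type*}
    {b : β → ℝ} (hb : ∀ j, 0 ≤ b j) {f : ι → κ → ℝ} (h : ∀ j, ∏ i, ∏ k, b j * f i k = 1)
    (j j' : β) : b j = b j' := by
  simp only [prod_prod_const_mul] at h
  have hf : ∏ i, ∏ k, f i k ≠ 0 := right_ne_zero_of_mul_eq_one (h j)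
  exact (pow_left_inj₀ (hb j) (hb j') (mul_ne_zero Fintype.card_ne_zero Fintype.card_ne_zero)).1
    (mul_right_cancel₀ hf ((h j).trans (h j').symm))

end ProdConst

section SliceNormalized

variable {ι₁ ι₂ ι₃ M : Type*} [Fintype ι₁] [Fintype ι₂] [Fintype ι₃]

def IsSliceNormalized [CommMonoid M] (B : ι₁ → ι₂ → ι₃ → M) : Prop :=
  (∀ i, ∏ j, ∏ k, B i j k = 1) ∧ (∀ j, ∏ i, ∏ k, B i j k = 1) ∧ (∀ k, ∏ i, ∏ j, B i j k = 1)

theorem IsSliceNormalized.of_mul [CommMonoid M] {T B : ι₁ → ι₂ → ι₃ → M}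
    (hB : IsSliceNormalized B)
    (hTB : IsSliceNormalized fun i j k => T i j k * B i j k) : IsSliceNormalized T := by
  obtain ⟨h₁, h₂, h₃⟩ := hB
  obtain ⟨g₁, g₂, g₃⟩ := hTB
  simp only [prod_mul_distrib, h₁, h₂, h₃, mul_one] at g₁ g₂ g₃
  exact ⟨g₁, g₂, g₃⟩

theorem IsSliceNormalized.rankOne_eq_one {a : ι₁ → ℝ} {b : ι₂ → ℝ} {c : ι₃ → ℝ}
    (ha : ∀ i, 0 ≤ a i) (hb : ∀ j, 0 ≤ b j) (hc : ∀ k, 0 ≤ c k)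
    (h : IsSliceNormalized fun i j k => a i * b j * c k) (i : ι₁) (j : ι₂) (k : ι₃) :
    a i * b j * c k = 1 := by
  have : Nonempty ι₁ := ⟨i⟩
  have : Nonempty ι₂ := ⟨j⟩
  have : Nonempty ι₃ := ⟨k⟩
  obtain ⟨h₁, h₂, h₃⟩ := h
  simp_rw [mul_assoc, mul_left_comm (a _)] at h₂
  simp_rw [mul_comm (a _ * b _)] at h₃
  have hb_const j' := eq_of_forall_prod_prod_const_mul_eq_one hb h₂ j' j
  have hc_const k' := eq_of_forall_prod_prod_const_mul_eq_one hc h₃ k' k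
  have hslice : (a i * b j * c k) ^ (Fintype.card ι₃ * Fintype.card ι₂) = 1 := by
    rw [← h₁ i, pow_mul, ← card_univ, ← card_univ, ← prod_const, ← prod_const]
    exact prod_congr rfl fun j' _ => prod_congr rfl fun k' _ => by
      beta_reduce; rw [hb_const j', hc_const k']
  exact (pow_eq_one_iff_of_nonneg (mul_nonneg (mul_nonneg (ha i) (hb j)) (hc k))
    (mul_ne_zero Fintype.card_ne_zero Fintype.card_ne_zero)).1 hslice

def scale (u₁ : ι₁ → ℝ) (u₂ : ι₂ → ℝ) (u₃ : ι₃ → ℝ) (A : ι₁ → ι₂ → ι₃ → ℝ) :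
    ι₁ → ι₂ → ι₃ → ℝ :=
  fun i j k => u₁ i * u₂ j * u₃ k * A i j k

theorem scale_eq_of_isSliceNormalized {A : ι₁ → ι₂ → ι₃ → ℝ}
    {z₁ w₁ : ι₁ → ℝ} {z₂ w₂ : ι₂ → ℝ} {z₃ w₃ : ι₃ → ℝ}
    (hz₁ : ∀ i, 0 < z₁ i) (hz₂ : ∀ j, 0 < z₂ j) (hz₃ : ∀ k, 0 < z₃ k)
    (hw₁ : ∀ i, 0 ≤ w₁ i) (hw₂ : ∀ j, 0 ≤ w₂ j) (hw₃ : ∀ k, 0 ≤ w₃ k)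
    (hz : IsSliceNormalized (scale z₁ z₂ z₃ A)) (hw : IsSliceNormalized (scale w₁ w₂ w₃ A)) :
    scale z₁ z₂ z₃ A = scale w₁ w₂ w₃ A := by
  have hw_eq : scale w₁ w₂ w₃ A = fun i j k =>
      w₁ i / z₁ i * (w₂ j / z₂ j) * (w₃ k / z₃ k) * scale z₁ z₂ z₃ A i j k := by
    funext i j k
    simp only [scale]
    field_simp [(hz₁ i).ne', (hz₂ j).ne', (hz₃ k).ne']
  have hgauge := hz.of_mul (hw_eq ▸ hw)
  funext i j k
  have h := hgauge.rankOne_eq_one (fun i => div_nonneg (hw₁ i) (hz₁ i).le)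
    (fun j => div_nonneg (hw₂ j) (hz₂ j).le) (fun k => div_nonneg (hw₃ k) (hz₃ k).le) i j k
  rw [hw_eq]
  beta_reduce
  rw [h, one_mul]

end SliceNormalized

theorem stmt_14_general (I₁ I₂ I₃ : ℕ) (A : Fin I₁ → Fin I₂ → Fin I₃ → ℝ)
    (z₁ : Fin I₁ → ℝ) (z₂ : Fin I₂ → ℝ) (z₃ : Fin I₃ → ℝ)
    (w₁ : Fin I₁ → ℝ) (w₂ : Fin I₂ → ℝ) (w₃ : Fin I₃ → ℝ)
    (hz₁ : ∀ i, 0 < z₁ i) (hz₂ : ∀ j, 0 < z₂ j) (hz₃ : ∀ k, 0 < z₃ k)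
    (hw₁ : ∀ i, 0 < w₁ i) (hw₂ : ∀ j, 0 < w₂ j) (hw₃ : ∀ k, 0 < w₃ k)
    (hzs₁ : ∀ i, ∏ j, ∏ k, z₁ i * z₂ j * z₃ k * A i j k = 1)
    (hzs₂ : ∀ j, ∏ i, ∏ k, z₁ i * z₂ j * z₃ k * A i j k = 1)
    (hzs₃ : ∀ k, ∏ i, ∏ j, z₁ i * z₂ j * z₃ k * A i j k = 1)
    (hws₁ : ∀ i, ∏ j, ∏ k, w₁ i * w₂ j * w₃ k * A i j k = 1)
    (hws₂ : ∀ j, ∏ i, ∏ k, w₁ i * w₂ j * w₃ k * A i j k = 1)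
    (hws₃ : ∀ k, ∏ i, ∏ j, w₁ i * w₂ j * w₃ k * A i j k = 1) :
    ∀ i j k, z₁ i * z₂ j * z₃ k * A i j k = w₁ i * w₂ j * w₃ k * A i j k :=
  congr_fun₃ <| scale_eq_of_isSliceNormalized hz₁ hz₂ hz₃
    (fun i => (hw₁ i).le) (fun j => (hw₂ j).le) (fun k => (hw₃ k).le)
    ⟨hzs₁, hzs₂, hzs₃⟩ ⟨hws₁, hws₂, hws₃⟩

/-- Uniqueness of the slice-product-normalized tensor (D = 3, fully observed):
two triples of positive mode-scaling vectors normalizing the same positive tensor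
yield the same normalized tensor. -/
theorem stmt_14 (I₁ I₂ I₃ : ℕ) (A : Fin I₁ → Fin I₂ → Fin I₃ → ℝ)
    (hA : ∀ i j k, 0 < A i j k)
    (z₁ : Fin I₁ → ℝ) (z₂ : Fin I₂ → ℝ) (z₃ : Fin I₃ → ℝ)
    (w₁ : Fin I₁ → ℝ) (w₂ : Fin I₂ → ℝ) (w₃ : Fin I₃ → ℝ)
    (hz₁ : ∀ i, 0 < z₁ i) (hz₂ : ∀ j, 0 < z₂ j) (hz₃ : ∀ k, 0 < z₃ k)
    (hw₁ : ∀ i, 0 < w₁ i) (hw₂ : ∀ j, 0 < w₂ j) (hw₃ : ∀ k, 0 < w₃ k)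
    (hzs₁ : ∀ i, ∏ j, ∏ k, z₁ i * z₂ j * z₃ k * A i j k = 1)
    (hzs₂ : ∀ j, ∏ i, ∏ k, z₁ i * z₂ j * z₃ k * A i j k = 1)
    (hzs₃ : ∀ k, ∏ i, ∏ j, z₁ i * z₂ j * z₃ k * A i j k = 1)
    (hws₁ : ∀ i, ∏ j, ∏ k, w₁ i * w₂ j * w₃ k * A i j k = 1)
    (hws₂ : ∀ j, ∏ i, ∏ k, w₁ i * w₂ j * w₃ k * A i j k = 1)
    (hws₃ : ∀ k, ∏ i, ∏ j, w₁ i * w₂ j * w₃ k * A i j k = 1) :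
    ∀ i j k, z₁ i * z₂ j * z₃ k * A i j k = w₁ i * w₂ j * w₃ k * A i j k :=
  stmt_14_general I₁ I₂ I₃ A z₁ z₂ z₃ w₁ w₂ w₃ hz₁ hz₂ hz₃ hw₁ hw₂ hw₃ hzs₁ hzs₂ hzs₃ hws₁ hws₂ hws₃
end
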